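/- (Stability of the Persistence Exponent.) Let Z and Z' be finite nonempty subsets of metric spaces, and define the interleaving distance between their 0-dimensional Betti curves as d_I(β₀(Z), β₀(Z')) = inf{α > 0 : ∀ ε ≥ 0, β₀^{ε}(Z) ≥ β₀^{ε+α}(Z') and β₀^{ε}(Z') ≥ β₀^{ε+α}(Z)}. If γ ≥ 0 and there exists a correspondence R between Z and Z' with distortion dis(R) ≤ 2γ, then d_I(β₀(Z), β₀(Z')) ≤ 2γ. Consequently, d_I(β₀(Z), β₀(Z')) ≤ inf{dis(R) : R a correspondence between Z and Z'} = 2·d_GH(Z, Z'). -/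

import Mathlib

/-- The ε-neighborhood graph on a finite subset `Z` of a metric space (the
1-skeleton of the Vietoris-Rips complex of `Z` at radius `ε`): edges join
distinct points at distance at most `ε`. -/
def nbhdGraph {X : Type*} [MetricSpace X] (Z : Finset X) (ε : ℝ) :
    SimpleGraph {x // x ∈ Z} where
  Adj a b := a ≠ b ∧ dist a b ≤ ε
  symm := by
    constructor
    intro a b h
    exact ⟨h.1.symm, by rw [dist_comm]; exact h.2⟩
  loopless := by
    constructor
    intro a h
    exact h.1 rfl

/-- The 0-th Betti number of `Z` at radius `ε`: the number of connected
components of the ε-neighborhood graph. -/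
noncomputable def betti0 {X : Type*} [MetricSpace X] (Z : Finset X) (ε : ℝ) : ℕ :=
  Nat.card (nbhdGraph Z ε).ConnectedComponent

/-- `R` is a correspondence between `Z` and `Z'`: a relation contained in
`Z × Z'` such that every point of `Z` is related to some point of `Z'` and
vice versa. -/
def IsCorrespondence {X Y : Type*} [MetricSpace X] [MetricSpace Y]
    (Z : Finset X) (Z' : Finset Y) (R : Set (X × Y)) : Prop :=
  (∀ p ∈ R, p.1 ∈ Z ∧ p.2 ∈ Z') ∧
  (∀ z ∈ Z, ∃ z' ∈ Z', (z, z') ∈ R) ∧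
  (∀ z' ∈ Z', ∃ z ∈ Z, (z, z') ∈ R)

/-- The distortion of a relation `R`:
`dis(R) = sup {|dist z₁ z₂ - dist z₁' z₂'| : (z₁, z₁') ∈ R, (z₂, z₂') ∈ R}`. -/
noncomputable def distortion {X Y : Type*} [MetricSpace X] [MetricSpace Y]
    (R : Set (X × Y)) : ℝ :=
  sSup {c : ℝ | ∃ p ∈ R, ∃ q ∈ R, c = |dist p.1 q.1 - dist p.2 q.2|}


/-- The interleaving distance between the 0-dimensional Betti curves of `Z` and
`Z'`: `d_I = inf {α > 0 : ∀ ε ≥ 0, β₀^ε(Z) ≥ β₀^{ε+α}(Z') and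
β₀^ε(Z') ≥ β₀^{ε+α}(Z)}`. -/
noncomputable def interleavingDistBetti {X Y : Type*} [MetricSpace X] [MetricSpace Y]
    (Z : Finset X) (Z' : Finset Y) : ℝ :=
  sInf {α : ℝ | 0 < α ∧ ∀ ε : ℝ, 0 ≤ ε →
    betti0 Z' (ε + α) ≤ betti0 Z ε ∧ betti0 Z (ε + α) ≤ betti0 Z' ε}

/-- The Gromov-Hausdorff distance between `Z` and `Z'`: half the infimum of the
distortions of all correspondences between `Z` and `Z'`. -/
noncomputable def gromovHausdorffDist {X Y : Type*} [MetricSpace X] [MetricSpace Y]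
    (Z : Finset X) (Z' : Finset Y) : ℝ :=
  sInf {c : ℝ | ∃ R : Set (X × Y), IsCorrespondence Z Z' R ∧ distortion R = c} / 2

namespace SimpleGraph

theorem card_connectedComponent_le_of_adj_reachable {V W : Type*} [Finite V]
    {G : SimpleGraph V} {H : SimpleGraph W} (f : V → W)
    (hadj : ∀ a b, G.Adj a b → H.Reachable (f a) (f b))
    (hcover : ∀ w, ∃ v, H.Reachable (f v) w) :
    Nat.card H.ConnectedComponent ≤ Nat.card G.ConnectedComponent := by
  have hreach : ∀ a b, G.Reachable a b → H.Reachable (f a) (f b) := by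
    intro a b hab
    rw [reachable_iff_reflTransGen] at hab ⊢
    exact Relation.ReflTransGen.lift' f (fun a b h => (reachable_iff_reflTransGen _ _).1
      (hadj a b h)) _ _ hab
  let F : G.ConnectedComponent → H.ConnectedComponent := Quot.map f hreach
  have hF : Function.Surjective F := by
    refine fun c => c.ind fun w => ?_
    obtain ⟨v, hv⟩ := hcover w
    exact ⟨G.connectedComponentMk v, ConnectedComponent.sound hv⟩
  exact Nat.card_le_card_of_surjective F hF

end SimpleGraph

section

variable {X Y : Type*} [MetricSpace X] [MetricSpace Y]

theorem nbhdGraph_reachable_of_dist_le {Z : Finset X} {ε : ℝ} {a b : {x // x ∈ Z}}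
    (h : dist (a : X) b ≤ ε) : (nbhdGraph Z ε).Reachable a b := by
  by_cases hab : a = b
  · exact hab ▸ SimpleGraph.Reachable.refl a
  · exact SimpleGraph.Adj.reachable ⟨hab, h⟩

theorem distortion_nonneg (R : Set (X × Y)) : 0 ≤ distortion R :=
  Real.sSup_nonneg fun _ ⟨_, _, _, _, hc⟩ => hc ▸ abs_nonneg _

theorem abs_dist_sub_dist_le_distortion {R : Set (X × Y)} (hR : R.Finite) {p q : X × Y}
    (hp : p ∈ R) (hq : q ∈ R) : |dist p.1 q.1 - dist p.2 q.2| ≤ distortion R := by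
  have hbdd : BddAbove {c : ℝ | ∃ p ∈ R, ∃ q ∈ R, c = |dist p.1 q.1 - dist p.2 q.2|} :=
    ((hR.prod hR).image fun t : (X × Y) × (X × Y) => |dist t.1.1 t.2.1 - dist t.1.2 t.2.2|
      ).bddAbove.mono <| by
        rintro _ ⟨p, hp, q, hq, rfl⟩
        exact ⟨(p, q), ⟨hp, hq⟩, rfl⟩
  exact le_csSup hbdd ⟨p, hp, q, hq, rfl⟩

theorem distortion_image_swap (R : Set (X × Y)) :
    distortion (Prod.swap '' R) = distortion R := by
  unfold distortion
  congr 1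
  ext c
  constructor
  · rintro ⟨_, ⟨p, hp, rfl⟩, _, ⟨q, hq, rfl⟩, rfl⟩
    exact ⟨p, hp, q, hq, by simp [abs_sub_comm]⟩
  · rintro ⟨p, hp, q, hq, rfl⟩
    exact ⟨p.swap, ⟨p, hp, rfl⟩, q.swap, ⟨q, hq, rfl⟩, by simp [abs_sub_comm]⟩

namespace IsCorrespondence

variable {Z : Finset X} {Z' : Finset Y} {R : Set (X × Y)}

theorem finite (hR : IsCorrespondence Z Z' R) : R.Finite :=
  (Z.finite_toSet.prod Z'.finite_toSet).subset fun p hp => hR.1 p hp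

theorem swap (hR : IsCorrespondence Z Z' R) : IsCorrespondence Z' Z (Prod.swap '' R) := by
  obtain ⟨hsub, hleft, hright⟩ := hR
  refine ⟨?_, fun z' hz' => ?_, fun z hz => ?_⟩
  · rintro _ ⟨p, hp, rfl⟩
    exact (hsub p hp).symm
  · obtain ⟨z, hz, hmem⟩ := hright z' hz'
    exact ⟨z, hz, (z, z'), hmem, rfl⟩
  · obtain ⟨z', hz', hmem⟩ := hleft z hz
    exact ⟨z', hz', (z, z'), hmem, rfl⟩

/- Send each point of `Z` to a partner in `Z'`: distances grow by at most `dis R`, so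
`ε`-edges become `(ε + α)`-paths, and every `z'` lies within `dis R ≤ ε + α` of the partner
of any of its own partners. -/
theorem betti0_le (hR : IsCorrespondence Z Z' R) {ε α : ℝ} (hε : 0 ≤ ε)
    (hα : distortion R ≤ α) : betti0 Z' (ε + α) ≤ betti0 Z ε := by
  choose f hfZ' hfR using fun z : {x // x ∈ Z} => hR.2.1 z z.2
  have hdist : ∀ {z : X} {z' : Y} (a : {x // x ∈ Z}), (z, z') ∈ R →
      dist (f a) z' ≤ dist (a : X) z + distortion R := fun a hz => by
    have := abs_dist_sub_dist_le_distortion hR.finite (hfR a) hz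
    linarith [(abs_le.1 this).1]
  refine SimpleGraph.card_connectedComponent_le_of_adj_reachable (fun a => ⟨f a, hfZ' a⟩)
    (fun a b hab => nbhdGraph_reachable_of_dist_le ?_) (fun w => ?_)
  · have hab' : dist (a : X) b ≤ ε := hab.2
    exact (hdist a (hfR b)).trans (by linarith)
  · obtain ⟨z, hz, hzw⟩ := hR.2.2 w w.2
    refine ⟨⟨z, hz⟩, nbhdGraph_reachable_of_dist_le ?_⟩
    have := hdist ⟨z, hz⟩ hzw
    rw [_root_.dist_self, zero_add] at this
    exact this.trans (by linarith)

theorem interleavingDistBetti_le (hR : IsCorrespondence Z Z' R) {α : ℝ}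
    (hα : distortion R ≤ α) : interleavingDistBetti Z Z' ≤ α := by
  -- `α` may be `0`, which the definition excludes, so every `β > α` is shown admissible instead.
  refine le_of_forall_gt_imp_ge_of_dense fun β hβ => csInf_le ⟨0, fun _ h => h.1.le⟩ ?_
  have hRβ : distortion R ≤ β := hα.trans hβ.le
  refine ⟨(distortion_nonneg R).trans_lt (hα.trans_lt hβ), fun ε hε =>
    ⟨hR.betti0_le hε hRβ, hR.swap.betti0_le hε ?_⟩⟩
  rwa [distortion_image_swap]

end IsCorrespondence

end

theorem stability_of_persistence_exponent_general
    {X Y : Type*} [MetricSpace X] [MetricSpace Y]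
    (Z : Finset X) (Z' : Finset Y)
    (γ : ℝ)
    (hcor : ∃ R : Set (X × Y), IsCorrespondence Z Z' R ∧ distortion R ≤ 2 * γ) :
    interleavingDistBetti Z Z' ≤ 2 * γ ∧
    interleavingDistBetti Z Z' ≤
      sInf {c : ℝ | ∃ R : Set (X × Y), IsCorrespondence Z Z' R ∧ distortion R = c} ∧
    sInf {c : ℝ | ∃ R : Set (X × Y), IsCorrespondence Z Z' R ∧ distortion R = c} =
      2 * gromovHausdorffDist Z Z' := by
  obtain ⟨R, hR, hdis⟩ := hcor
  refine ⟨hR.interleavingDistBetti_le hdis, le_csInf ⟨_, R, hR, rfl⟩ ?_, ?_⟩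
  · rintro _ ⟨R', hR', rfl⟩
    exact hR'.interleavingDistBetti_le le_rfl
  · unfold gromovHausdorffDist
    ring

/-- Stability of the persistence exponent: if there is a correspondence between
`Z` and `Z'` of distortion at most `2γ`, then the interleaving distance between
the 0-dimensional Betti curves of `Z` and `Z'` is at most `2γ`; consequently it
is at most the infimum of the distortions of all correspondences, which equals
`2 · d_GH(Z, Z')`. -/
theorem stability_of_persistence_exponent
    {X Y : Type*} [MetricSpace X] [MetricSpace Y]
    (Z : Finset X) (Z' : Finset Y) (hZ : Z.Nonempty) (hZ' : Z'.Nonempty)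
    (γ : ℝ) (hγ : 0 ≤ γ)
    (hcor : ∃ R : Set (X × Y), IsCorrespondence Z Z' R ∧ distortion R ≤ 2 * γ) :
    interleavingDistBetti Z Z' ≤ 2 * γ ∧
    interleavingDistBetti Z Z' ≤
      sInf {c : ℝ | ∃ R : Set (X × Y), IsCorrespondence Z Z' R ∧ distortion R = c} ∧
    sInf {c : ℝ | ∃ R : Set (X × Y), IsCorrespondence Z Z' R ∧ distortion R = c} =
      2 * gromovHausdorffDist Z Z' :=
  stability_of_persistence_exponent_general Z Z' γ hcor
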